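/- There exist 37 points p₁, …, p₃₇ in the unit square [0,1]² ⊆ ℝ² with ‖pᵢ − pⱼ‖ ≥ 0.196 for all i ≠ j, such that the configuration {p₁, …, p₃₇} is invariant as a set under the reflection (x, y) ↦ (1 − x, y) of the unit square. -/

import Mathlib

/-!
The witness is a 37-point configuration on the grid of mesh `10⁻⁹` approximating the paper's
packing, chosen so that its list of integer coordinates is closed under `(a, b) ↦ (10⁹ - a, b)`.
On the grid, containment, separation (squared integer distances at least `(196·10⁶)²`) and the
mirror symmetry are finite statements about integers that the kernel checks by evaluation;
dividing by `10⁹` turns them into the required statements in the plane.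
-/

/-- Reflection of the unit square across the vertical line `x = 1/2`:
`(x, y) ↦ (1 - x, y)`. -/
noncomputable def squareReflection (x : EuclideanSpace ℝ (Fin 2)) :
    EuclideanSpace ℝ (Fin 2) :=
  (WithLp.equiv 2 (Fin 2 → ℝ)).symm ![1 - x 0, x 1]

open Set Function

theorem Function.Involutive.image_eq_self_of_mapsTo {α : Type*} {f : α → α} {s : Set α}
    (hf : Involutive f) (h : MapsTo f s s) : f '' s = s :=
  h.image_subset.antisymm fun x hx => ⟨f x, h hx, hf x⟩

theorem squareReflection_involutive : Involutive squareReflection := by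
  intro x
  ext t
  fin_cases t <;> simp [squareReflection]

noncomputable def gridPoint (N : ℕ) (a : ℤ × ℤ) : EuclideanSpace ℝ (Fin 2) :=
  !₂[a.1 / N, a.2 / N]

section gridPoint

variable {N : ℕ}

theorem div_mem_unitInterval {n : ℤ} (h : 0 ≤ n ∧ n ≤ N) : (n / N : ℝ) ∈ Icc (0 : ℝ) 1 := by
  obtain ⟨h0, h1⟩ := h
  rcases N.eq_zero_or_pos with rfl | hN
  · simp
  refine ⟨by positivity, (div_le_one (by positivity)).2 ?_⟩
  exact_mod_cast h1

theorem gridPoint_mem_unitSquare {a : ℤ × ℤ} (h₁ : 0 ≤ a.1 ∧ a.1 ≤ N) (h₂ : 0 ≤ a.2 ∧ a.2 ≤ N)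
    (t : Fin 2) : gridPoint N a t ∈ Icc (0 : ℝ) 1 := by
  fin_cases t
  · exact div_mem_unitInterval h₁
  · exact div_mem_unitInterval h₂

theorem div_le_norm_gridPoint_sub {a b : ℤ × ℤ} {d : ℕ}
    (h : d ^ 2 ≤ (a.1 - b.1) ^ 2 + (a.2 - b.2) ^ 2) :
    (d / N : ℝ) ≤ ‖gridPoint N a - gridPoint N b‖ := by
  rw [EuclideanSpace.norm_eq, Fin.sum_univ_two, Real.le_sqrt (by positivity) (by positivity)]
  simp only [gridPoint, PiLp.sub_apply, Matrix.cons_val_zero, Matrix.cons_val_one,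
    Matrix.cons_val_fin_one, Real.norm_eq_abs, sq_abs]
  rw [← sub_div, ← sub_div, div_pow, div_pow, div_pow, ← add_div]
  gcongr
  exact_mod_cast h

theorem squareReflection_gridPoint (hN : N ≠ 0) (a : ℤ × ℤ) :
    squareReflection (gridPoint N a) = gridPoint N (N - a.1, a.2) := by
  ext t
  fin_cases t <;> simp [squareReflection, gridPoint, sub_div, hN]

end gridPoint

def packing37 : Fin 37 → ℤ × ℤ :=
  ![(3149, 71888372),
   (182809849, 11911),
   (379241503, 2545),
   (620758497, 2545),
   (817190151, 11911),
   (999996851, 71888372),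
   (281039443, 170110741),
   (500000000, 154938278),
   (718960557, 170110741),
   (11358, 268326015),
   (182815085, 340219776),
   (401781998, 325041836),
   (598218002, 325041836),
   (817184915, 340219776),
   (999988642, 268326015),
   (29423713, 463587005),
   (303563577, 495153145),
   (500000000, 495158333),
   (696436423, 495153145),
   (970576287, 463587005),
   (7108, 657949750),
   (196425771, 659780894),
   (401775814, 665255524),
   (598224186, 665255524),
   (803574229, 659780894),
   (999992892, 657949750),
   (97004104, 829181693),
   (294640266, 829888995),
   (500000000, 835356752),
   (705359734, 829888995),
   (902995896, 829181693),
   (6329, 999982784),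
   (196429374, 999998934),
   (392878216, 999994912),
   (607121784, 999994912),
   (803570626, 999998934),
   (999993671, 999982784)]

theorem packing37_mem_grid :
    ∀ i, (0 ≤ (packing37 i).1 ∧ (packing37 i).1 ≤ 10 ^ 9) ∧
      (0 ≤ (packing37 i).2 ∧ (packing37 i).2 ≤ 10 ^ 9) := by
  decide

theorem packing37_separated : ∀ i j, i ≠ j →
    (196000000 : ℤ) ^ 2 ≤ ((packing37 i).1 - (packing37 j).1) ^ 2 +
      ((packing37 i).2 - (packing37 j).2) ^ 2 := by
  decide

theorem packing37_mirror :
    ∀ i, ∃ j, packing37 j = (10 ^ 9 - (packing37 i).1, (packing37 i).2) := by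
  decide

/-- There exist 37 points in the unit square `[0,1]²` with all pairwise
Euclidean distances at least 0.196, whose configuration is invariant as a set
under the reflection `(x, y) ↦ (1 - x, y)` (the improved packing of 37 disks
is mirror-symmetric). -/
theorem packing_37_disks_mirror_symmetric :
    ∃ p : Fin 37 → EuclideanSpace ℝ (Fin 2),
      (∀ i, ∀ t : Fin 2, p i t ∈ Set.Icc (0 : ℝ) 1) ∧
      (∀ i j, i ≠ j → (0.196 : ℝ) ≤ ‖p i - p j‖) ∧
      squareReflection '' Set.range p = Set.range p := by
  refine ⟨fun i => gridPoint (10 ^ 9) (packing37 i), fun i => ?_, fun i j hij => ?_, ?_⟩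
  · exact gridPoint_mem_unitSquare (by exact_mod_cast (packing37_mem_grid i).1)
      (by exact_mod_cast (packing37_mem_grid i).2)
  · calc (0.196 : ℝ) = (196000000 : ℕ) / (10 ^ 9 : ℕ) := by norm_num
      _ ≤ _ := div_le_norm_gridPoint_sub (by exact_mod_cast packing37_separated i j hij)
  · refine squareReflection_involutive.image_eq_self_of_mapsTo ?_
    rintro _ ⟨i, rfl⟩
    obtain ⟨j, hj⟩ := packing37_mirror i
    refine ⟨j, ?_⟩
    simp only [squareReflection_gridPoint (by norm_num : 10 ^ 9 ≠ 0), hj, Nat.cast_pow,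
      Nat.cast_ofNat]
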